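/- arXiv:1807.11030 — 3 statements merged into one kernel-verified Lean document; each statement's English description precedes it below -/
import Mathlib

section
/- (a) An ideal $I$ of $R$ is a strong $\mathcal{H}_Y$-ideal if and only if $I$ is an intersection of a family of prime ideals, each of which is a strong $\mathcal{H}_Y$-ideal minimal over $I$; the analogous statement holds with '$\mathcal{H}_Y$-ideal' in place of 'strong $\mathcal{H}_Y$-ideal'. (b) Every ideal that is maximal in the set of proper strong $\mathcal{H}_Y$-ideals of $R$ (ordered by inclusion) is a prime ideal, and likewise every ideal maximal in the set of proper $\mathcal{H}_Y$-ideals is prime. -/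
/-- `hSet Y S` is the set of primes (ideals) in `Y` containing the subset `S`. -/
def hSet {R : Type*} [CommRing R] (Y : Set (Ideal R)) (S : Set R) : Set (Ideal R) :=
  {P ∈ Y | S ⊆ (P : Set R)}

/-- `kSet 𝒮` is the intersection of the ideals in `𝒮` (the whole ring if `𝒮 = ∅`). -/
def kSet {R : Type*} [CommRing R] (𝒮 : Set (Ideal R)) : Ideal R := sInf 𝒮

/-- An `ℋ_Y`-ideal. -/
def IsHIdeal {R : Type*} [CommRing R] (Y : Set (Ideal R)) (I : Ideal R) : Prop :=
  ∀ a ∈ I, ∀ b : R, hSet Y {a} ⊆ hSet Y {b} → b ∈ I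

/-- A strong `ℋ_Y`-ideal. -/
def IsStrongHIdeal {R : Type*} [CommRing R] (Y : Set (Ideal R)) (I : Ideal R) : Prop :=
  ∀ F : Set R, F.Finite → F ⊆ (I : Set R) → ∀ b : R, hSet Y F ⊆ hSet Y {b} → b ∈ I

/-- A `Y`-Hilbert ideal. -/
def IsYHilbert {R : Type*} [CommRing R] (Y : Set (Ideal R)) (I : Ideal R) : Prop :=
  I = kSet (hSet Y (I : Set R))

/-!
A (strong) `ℋ_Y`-ideal `I` is radical, since `x` and `xⁿ` lie in the same primes of `Y`; hence
`I` is the intersection of its minimal primes. For a minimal prime `P` of `I`, every `a ∈ P`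
satisfies `c * aⁿ ∈ I` for some `c ∉ P`; this lets one transport the defining implication of
a (strong) `ℋ_Y`-ideal from `I` to `P`, at the cost of a factor `c` which is then cancelled
in the prime `P`. Conversely, intersections of (strong) `ℋ_Y`-ideals are again such. Finally,
a maximal proper (strong) `ℋ_Y`-ideal equals any of its minimal primes, which are again
(strong) `ℋ_Y`-ideals.
-/

namespace Ideal

variable {R : Type*} [CommRing R]

theorem exists_mul_pow_mem_of_mem_minimalPrimes {I P : Ideal R} (hP : P ∈ I.minimalPrimes)
    {a : R} (ha : a ∈ P) : ∃ c ∉ P, ∃ n : ℕ, c * a ^ n ∈ I := by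
  by_contra! h
  have := hP.1.1
  have hdisj : Disjoint (I : Set R) (P.primeCompl ⊔ Submonoid.powers a : Submonoid R) := by
    refine Set.disjoint_left.mpr fun x hxI hx => ?_
    obtain ⟨c, hc, _, ⟨n, rfl⟩, rfl⟩ := Submonoid.mem_sup.mp hx
    exact h c hc n hxI
  obtain ⟨Q, hQ, hIQ, hQS⟩ := exists_le_prime_disjoint I _ hdisj
  have hQP : Q ≤ P := fun x hxQ => by
    by_contra hxP
    exact Set.disjoint_left.mp hQS hxQ (Submonoid.mem_sup_left (show x ∈ P.primeCompl from hxP))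
  have haQ : a ∈ Q := hP.2 ⟨hQ, hIQ⟩ hQP ha
  exact Set.disjoint_left.mp hQS haQ (Submonoid.mem_sup_right (Submonoid.mem_powers a))

theorem exists_finite_of_mem_minimalPrimes {I P : Ideal R} (hP : P ∈ I.minimalPrimes)
    {F : Set R} (hF : F.Finite) (hFP : F ⊆ P) :
    ∃ c ∉ P, ∃ G : Set R, G.Finite ∧ G ⊆ I ∧
      ∀ Q : Ideal R, Q.IsPrime → G ⊆ Q → c ∉ Q → F ⊆ Q := by
  have := hF.fintype
  choose c hc n hn using fun a : F => exists_mul_pow_mem_of_mem_minimalPrimes hP (hFP a.2)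
  have := hP.1.1
  refine ⟨∏ a, c a, fun h => ?_, Set.range fun a => c a * a ^ n a, Set.finite_range _,
    Set.range_subset_iff.mpr hn, fun Q hQ hGQ hcQ a ha => ?_⟩
  · obtain ⟨a, -, hcaP⟩ := IsPrime.prod_mem_iff.mp h
    exact hc a hcaP
  · have hcaQ : c ⟨a, ha⟩ ∉ Q := fun h =>
      hcQ (IsPrime.prod_mem_iff.mpr ⟨_, Finset.mem_univ _, h⟩)
    exact hQ.mem_of_pow_mem _ ((hQ.mem_or_mem (hGQ ⟨⟨a, ha⟩, rfl⟩)).resolve_left hcaQ)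

theorem eq_of_mem_minimalPrimes_of_le {I P Q : Ideal R} (hP : P ∈ I.minimalPrimes)
    (hQ : Q.IsPrime) (hIQ : I ≤ Q) (hQP : Q ≤ P) : Q = P :=
  le_antisymm hQP (hP.2 ⟨hQ, hIQ⟩ hQP)

variable {Φ : Ideal R → Prop}

theorem iff_exists_eq_sInf_of_minimalPrimes
    (hmin : ∀ I, Φ I → ∀ P ∈ I.minimalPrimes, Φ P) (hrad : ∀ I, Φ I → I.IsRadical)
    (hsInf : ∀ Ps : Set (Ideal R), (∀ P ∈ Ps, Φ P) → Φ (sInf Ps)) (I : Ideal R) :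
    Φ I ↔ ∃ Ps : Set (Ideal R),
      (∀ P ∈ Ps, P.IsPrime ∧ Φ P ∧ I ≤ P ∧
        ∀ Q : Ideal R, Q.IsPrime → I ≤ Q → Q ≤ P → Q = P) ∧
      I = sInf Ps := by
  refine ⟨fun hI => ⟨I.minimalPrimes, fun P hP => ⟨hP.1.1, hmin I hI P hP, hP.1.2,
    fun _ => eq_of_mem_minimalPrimes_of_le hP⟩, ?_⟩, ?_⟩
  · rw [sInf_minimalPrimes, (hrad I hI).radical]
  · rintro ⟨Ps, hPs, rfl⟩
    exact hsInf Ps fun P hP => (hPs P hP).2.1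

theorem isPrime_of_maximal_of_minimalPrimes
    (hmin : ∀ I, Φ I → ∀ P ∈ I.minimalPrimes, Φ P) {I : Ideal R} (hI : I ≠ ⊤) (hΦ : Φ I)
    (hmax : ∀ J, J ≠ ⊤ → Φ J → I ≤ J → I = J) : I.IsPrime := by
  obtain ⟨P, hP⟩ := nonempty_minimalPrimes hI
  rw [hmax P hP.1.1.ne_top (hmin I hΦ P hP) hP.1.2]
  exact hP.1.1

end Ideal

section HIdeal

variable {R : Type*} [CommRing R] {Y : Set (Ideal R)} {I : Ideal R}

theorem hSet_subset_hSet_singleton_iff {F : Set R} {b : R} :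
    hSet Y F ⊆ hSet Y {b} ↔ ∀ Q ∈ Y, F ⊆ Q → b ∈ Q :=
  ⟨fun h _ hQ hFQ => (h ⟨hQ, hFQ⟩).2 rfl,
    fun h Q hQ => ⟨hQ.1, Set.singleton_subset_iff.mpr (h Q hQ.1 hQ.2)⟩⟩

theorem hSet_singleton_subset_hSet_singleton_iff {a b : R} :
    hSet Y {a} ⊆ hSet Y {b} ↔ ∀ Q ∈ Y, a ∈ Q → b ∈ Q := by
  simp [hSet_subset_hSet_singleton_iff]

theorem IsHIdeal.mem_of_forall (hI : IsHIdeal Y I) {a b : R} (ha : a ∈ I)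
    (h : ∀ Q ∈ Y, a ∈ Q → b ∈ Q) : b ∈ I :=
  hI a ha b (hSet_singleton_subset_hSet_singleton_iff.mpr h)

theorem IsStrongHIdeal.mem_of_forall (hI : IsStrongHIdeal Y I) {F : Set R} (hF : F.Finite)
    (hFI : F ⊆ I) {b : R} (h : ∀ Q ∈ Y, F ⊆ Q → b ∈ Q) : b ∈ I :=
  hI F hF hFI b (hSet_subset_hSet_singleton_iff.mpr h)

theorem IsStrongHIdeal.isHIdeal (hI : IsStrongHIdeal Y I) : IsHIdeal Y I :=
  fun a ha b hb => hI {a} (Set.finite_singleton a) (by simpa using ha) b hb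

theorem IsHIdeal.isRadical (hY : ∀ P ∈ Y, P.IsPrime) (hI : IsHIdeal Y I) : I.IsRadical :=
  fun _ ⟨n, hn⟩ => hI.mem_of_forall hn fun Q hQ => (hY Q hQ).mem_of_pow_mem n

theorem isHIdeal_sInf {Ps : Set (Ideal R)} (h : ∀ P ∈ Ps, IsHIdeal Y P) :
    IsHIdeal Y (sInf Ps) :=
  fun a ha b hb => Ideal.mem_sInf.mpr fun _ hP => h _ hP a (Ideal.mem_sInf.mp ha hP) b hb

theorem isStrongHIdeal_sInf {Ps : Set (Ideal R)} (h : ∀ P ∈ Ps, IsStrongHIdeal Y P) :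
    IsStrongHIdeal Y (sInf Ps) :=
  fun F hF hFI b hb => Ideal.mem_sInf.mpr fun _ hP =>
    h _ hP F hF (hFI.trans fun _ hx => Ideal.mem_sInf.mp hx hP) b hb

theorem IsHIdeal.of_mem_minimalPrimes (hY : ∀ P ∈ Y, P.IsPrime) {P : Ideal R}
    (hI : IsHIdeal Y I) (hP : P ∈ I.minimalPrimes) : IsHIdeal Y P := by
  refine fun a ha b hab => ?_
  rw [hSet_singleton_subset_hSet_singleton_iff] at hab
  obtain ⟨c, hc, n, hcan⟩ := Ideal.exists_mul_pow_mem_of_mem_minimalPrimes hP ha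
  have hcb : c * b ∈ I := hI.mem_of_forall hcan fun Q hQY hQ => by
    rcases (hY Q hQY).mem_or_mem hQ with hcQ | haQ
    · exact Q.mul_mem_right b hcQ
    · exact Q.mul_mem_left c (hab Q hQY ((hY Q hQY).mem_of_pow_mem n haQ))
  exact (hP.1.1.mem_or_mem (hP.1.2 hcb)).resolve_left hc

theorem IsStrongHIdeal.of_mem_minimalPrimes (hY : ∀ P ∈ Y, P.IsPrime) {P : Ideal R}
    (hI : IsStrongHIdeal Y I) (hP : P ∈ I.minimalPrimes) : IsStrongHIdeal Y P := by
  refine fun F hF hFP b hFb => ?_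
  rw [hSet_subset_hSet_singleton_iff] at hFb
  obtain ⟨c, hc, G, hG, hGI, hGF⟩ := Ideal.exists_finite_of_mem_minimalPrimes hP hF hFP
  have hcb : c * b ∈ I := hI.mem_of_forall hG hGI fun Q hQY hGQ => by
    by_cases hcQ : c ∈ Q
    · exact Q.mul_mem_right b hcQ
    · exact Q.mul_mem_left c (hFb Q hQY (hGF Q (hY Q hQY) hGQ hcQ))
  exact (hP.1.1.mem_or_mem (hP.1.2 hcb)).resolve_left hc

end HIdeal

/-- (a) an ideal is a (strong) `ℋ_Y`-ideal iff it is an intersection of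
prime (strong) `ℋ_Y`-ideals minimal over it; (b) maximal elements among proper
(strong) `ℋ_Y`-ideals are prime. -/
theorem stmt8 {R : Type*} [CommRing R] (Y : Set (Ideal R))
    (hprime : ∀ P ∈ Y, P.IsPrime) :
    (∀ I : Ideal R, IsStrongHIdeal Y I ↔
      ∃ Ps : Set (Ideal R),
        (∀ P ∈ Ps, P.IsPrime ∧ IsStrongHIdeal Y P ∧ I ≤ P ∧
          ∀ Q : Ideal R, Q.IsPrime → I ≤ Q → Q ≤ P → Q = P) ∧
        I = sInf Ps) ∧
    (∀ I : Ideal R, IsHIdeal Y I ↔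
      ∃ Ps : Set (Ideal R),
        (∀ P ∈ Ps, P.IsPrime ∧ IsHIdeal Y P ∧ I ≤ P ∧
          ∀ Q : Ideal R, Q.IsPrime → I ≤ Q → Q ≤ P → Q = P) ∧
        I = sInf Ps) ∧
    (∀ I : Ideal R, I ≠ ⊤ → IsStrongHIdeal Y I →
      (∀ J : Ideal R, J ≠ ⊤ → IsStrongHIdeal Y J → I ≤ J → I = J) → I.IsPrime) ∧
    (∀ I : Ideal R, I ≠ ⊤ → IsHIdeal Y I →
      (∀ J : Ideal R, J ≠ ⊤ → IsHIdeal Y J → I ≤ J → I = J) → I.IsPrime) := by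
  have hStrongMin : ∀ I, IsStrongHIdeal Y I → ∀ P ∈ I.minimalPrimes, IsStrongHIdeal Y P :=
    fun _ hI _ => hI.of_mem_minimalPrimes hprime
  have hMin : ∀ I, IsHIdeal Y I → ∀ P ∈ I.minimalPrimes, IsHIdeal Y P :=
    fun _ hI _ => hI.of_mem_minimalPrimes hprime
  refine ⟨Ideal.iff_exists_eq_sInf_of_minimalPrimes hStrongMin
      (fun _ hI => hI.isHIdeal.isRadical hprime) (fun _ => isStrongHIdeal_sInf),
    Ideal.iff_exists_eq_sInf_of_minimalPrimes hMin
      (fun _ hI => hI.isRadical hprime) (fun _ => isHIdeal_sInf),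
    fun _ => Ideal.isPrime_of_maximal_of_minimalPrimes hStrongMin,
    fun _ => Ideal.isPrime_of_maximal_of_minimalPrimes hMin⟩
end

section
/- Let $\mathscr{F}$ be an $\mathcal{H}_Y$-filter. Then the set $\mathcal{H}_Y^{-1}(\mathscr{F}) = \{a \in R : h_Y(a) \in \mathscr{F}\}$ is a strong $\mathcal{H}_Y$-ideal of $R$. Moreover, for every finite subset $F$ of $R$: $h_Y(F) \in \mathscr{F}$ if and only if $F \subseteq \mathcal{H}_Y^{-1}(\mathscr{F})$. -/
section hSet

variable {R : Type*} [CommRing R] {Y : Set (Ideal R)} {S T : Set R}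

theorem hSet_antitone (h : S ⊆ T) : hSet Y T ⊆ hSet Y S :=
  fun _ hP => ⟨hP.1, h.trans hP.2⟩

theorem hSet_empty : hSet Y (∅ : Set R) = Y := by
  ext
  simp [hSet]

theorem hSet_insert (a : R) (S : Set R) : hSet Y (insert a S) = hSet Y {a} ∩ hSet Y S := by
  ext
  simp only [hSet, Set.mem_inter_iff, Set.mem_ofPred_eq, Set.insert_subset_iff,
    Set.singleton_subset_iff]
  tauto

theorem hSet_subset_hSet_singleton_of_mem_span {b : R} (hb : b ∈ Ideal.span S) :
    hSet Y S ⊆ hSet Y {b} :=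
  fun _ hP => ⟨hP.1, Set.singleton_subset_iff.2 ((Ideal.span_le.2 hP.2) hb)⟩

end hSet

section Filter

variable {R : Type*} [CommRing R] {Y : Set (Ideal R)} {Fil : Set (Set (Ideal R))}

theorem hSet_empty_mem (hsub : ∀ A ∈ Fil, ∃ F : Set R, F.Finite ∧ A = hSet Y F)
    (hne : Fil.Nonempty)
    (hup : ∀ A ∈ Fil, ∀ B : Set (Ideal R),
      (∃ G : Set R, G.Finite ∧ B = hSet Y G) → A ⊆ B → B ∈ Fil) :
    hSet Y (∅ : Set R) ∈ Fil := by
  obtain ⟨A, hA⟩ := hne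
  obtain ⟨F, -, rfl⟩ := hsub A hA
  exact hup _ hA _ ⟨∅, Set.finite_empty, rfl⟩ (hSet_antitone (Set.empty_subset F))

theorem hSet_mem_iff_forall_singleton_mem
    (hsub : ∀ A ∈ Fil, ∃ F : Set R, F.Finite ∧ A = hSet Y F)
    (hne : Fil.Nonempty)
    (hinter : ∀ A ∈ Fil, ∀ B ∈ Fil, A ∩ B ∈ Fil)
    (hup : ∀ A ∈ Fil, ∀ B : Set (Ideal R),
      (∃ G : Set R, G.Finite ∧ B = hSet Y G) → A ⊆ B → B ∈ Fil)
    {F : Set R} (hF : F.Finite) :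
    hSet Y F ∈ Fil ↔ ∀ a ∈ F, hSet Y {a} ∈ Fil := by
  refine ⟨fun h a ha => hup _ h _ ⟨{a}, Set.finite_singleton a, rfl⟩
    (hSet_antitone (Set.singleton_subset_iff.2 ha)), fun h => ?_⟩
  induction F, hF using Set.Finite.induction_on with
  | empty => exact hSet_empty_mem hsub hne hup
  | @insert a S _ _ ih =>
    rw [hSet_insert]
    exact hinter _ (h a (Set.mem_insert a S)) _
      (ih fun x hx => h x (Set.mem_insert_of_mem a hx))

end Filter

theorem stmt9_general {R : Type*} [CommRing R] (Y : Set (Ideal R))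
    (Fil : Set (Set (Ideal R)))
    (hsub : ∀ A ∈ Fil, ∃ F : Set R, F.Finite ∧ A = hSet Y F)
    (hne : Fil.Nonempty)
    (hinter : ∀ A ∈ Fil, ∀ B ∈ Fil, A ∩ B ∈ Fil)
    (hup : ∀ A ∈ Fil, ∀ B : Set (Ideal R),
      (∃ G : Set R, G.Finite ∧ B = hSet Y G) → A ⊆ B → B ∈ Fil) :
    (∃ I : Ideal R, (I : Set R) = {a : R | hSet Y {a} ∈ Fil} ∧
      IsStrongHIdeal Y I) ∧
    (∀ F : Set R, F.Finite →
      (hSet Y F ∈ Fil ↔ F ⊆ {a : R | hSet Y {a} ∈ Fil})) := by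
  have hmem_iff := fun F (hF : Set.Finite F) =>
    hSet_mem_iff_forall_singleton_mem hsub hne hinter hup hF
  have hclosed : ∀ F : Set R, F.Finite → F ⊆ {a : R | hSet Y {a} ∈ Fil} →
      ∀ b : R, hSet Y F ⊆ hSet Y {b} → hSet Y {b} ∈ Fil := fun F hF hFI b hb =>
    hup _ ((hmem_iff F hF).2 hFI) _ ⟨{b}, Set.finite_singleton b, rfl⟩ hb
  have hspan : ∀ F : Set R, F.Finite → F ⊆ {a : R | hSet Y {a} ∈ Fil} →
      ∀ b ∈ Ideal.span F, hSet Y {b} ∈ Fil := fun F hF hFI b hb =>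
    hclosed F hF hFI b (hSet_subset_hSet_singleton_of_mem_span hb)
  let I : Ideal R :=
    { carrier := {a : R | hSet Y {a} ∈ Fil}
      add_mem' := fun {a b} ha hb => hspan {a, b} (Set.toFinite _)
        (Set.insert_subset_iff.2 ⟨ha, Set.singleton_subset_iff.2 hb⟩) _
        (Ideal.add_mem _ (Ideal.subset_span (by simp)) (Ideal.subset_span (by simp)))
      zero_mem' := hspan ∅ Set.finite_empty (Set.empty_subset _) 0 (Ideal.zero_mem _)
      smul_mem' := fun r a ha => hspan {a} (Set.finite_singleton a)
        (Set.singleton_subset_iff.2 ha) _ (Ideal.mul_mem_left _ r (Ideal.subset_span rfl)) }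
  exact ⟨⟨I, rfl, fun F hF hFI b hb => hclosed F hF hFI b hb⟩, hmem_iff⟩

/-- for an `ℋ_Y`-filter `F`, the set `ℋ_Y⁻¹(F) = {a : h_Y(a) ∈ F}`
is (the underlying set of) a strong `ℋ_Y`-ideal, and for every finite `F' ⊆ R`,
`h_Y(F') ∈ F` iff `F' ⊆ ℋ_Y⁻¹(F)`. -/
theorem stmt9 {R : Type*} [CommRing R] (Y : Set (Ideal R))
    (hprime : ∀ P ∈ Y, P.IsPrime)
    (Fil : Set (Set (Ideal R)))
    (hsub : ∀ A ∈ Fil, ∃ F : Set R, F.Finite ∧ A = hSet Y F)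
    (hne : Fil.Nonempty)
    (hinter : ∀ A ∈ Fil, ∀ B ∈ Fil, A ∩ B ∈ Fil)
    (hup : ∀ A ∈ Fil, ∀ B : Set (Ideal R),
      (∃ G : Set R, G.Finite ∧ B = hSet Y G) → A ⊆ B → B ∈ Fil) :
    (∃ I : Ideal R, (I : Set R) = {a : R | hSet Y {a} ∈ Fil} ∧
      IsStrongHIdeal Y I) ∧
    (∀ F : Set R, F.Finite →
      (hSet Y F ∈ Fil ↔ F ⊆ {a : R | hSet Y {a} ∈ Fil})) :=
  stmt9_general Y Fil hsub hne hinter hup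
end

section
/- If $J$ is a strong $\mathcal{H}_Y$-ideal of $R$, then for every ideal $I$ of $R$ the ideal quotient $(J : I) = \{x \in R : xI \subseteq J\}$ is a strong $\mathcal{H}_Y$-ideal. Likewise, if $J$ is an $\mathcal{H}_Y$-ideal then $(J : I)$ is an $\mathcal{H}_Y$-ideal, and if $J$ is a $Y$-Hilbert ideal then $(J : I)$ is a $Y$-Hilbert ideal. -/
/-!
Fix `i ∈ I`. A prime `P` not containing `i` contains `x` iff it contains `x * i`, while a prime
containing `i` contains every `x * i`. Hence multiplication by `i` carries an inclusion
`h_Y(F) ⊆ h_Y(b)` to `h_Y(F i) ⊆ h_Y(b i)`, and `F ⊆ (J : I)` gives `F i ⊆ J`. The three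
properties all say that `h_Y(F) ⊆ h_Y(b)` forces `b` into the ideal, for `F` a singleton, a finite
subset, or (for Hilbert ideals) the whole ideal; so each property of `J` yields `b i ∈ J` for all
`i ∈ I`, i.e. `b ∈ (J : I)`.
-/

section

variable {R : Type*} [CommRing R] {Y : Set (Ideal R)}

lemma hSet_anti {S T : Set R} (h : S ⊆ T) : hSet Y T ⊆ hSet Y S :=
  fun _ hP => ⟨hP.1, h.trans hP.2⟩

lemma mem_hSet_singleton {b : R} {P : Ideal R} : P ∈ hSet Y {b} ↔ P ∈ Y ∧ b ∈ P := by
  simp only [hSet, Set.mem_ofPred_eq, Set.singleton_subset_iff, SetLike.mem_coe]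

lemma mem_kSet_hSet_iff {S : Set R} {b : R} : b ∈ kSet (hSet Y S) ↔ hSet Y S ⊆ hSet Y {b} := by
  simp only [kSet, Submodule.mem_sInf]
  exact ⟨fun h P hP => mem_hSet_singleton.2 ⟨hP.1, h P hP⟩,
    fun h P hP => (mem_hSet_singleton.1 (h hP)).2⟩

lemma isYHilbert_iff {I : Ideal R} : IsYHilbert Y I ↔ ∀ b, hSet Y I ⊆ hSet Y {b} → b ∈ I := by
  have hle : I ≤ kSet (hSet Y I) := fun x hx => mem_kSet_hSet_iff.2 fun P hP =>
    mem_hSet_singleton.2 ⟨hP.1, hP.2 hx⟩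
  simp only [IsYHilbert, ← mem_kSet_hSet_iff]
  exact ⟨fun h b hb => h ▸ hb, fun h => le_antisymm hle h⟩

lemma hSet_image_mul_subset (hprime : ∀ P ∈ Y, P.IsPrime) {F : Set R} {b : R}
    (h : hSet Y F ⊆ hSet Y {b}) (i : R) : hSet Y ((· * i) '' F) ⊆ hSet Y {b * i} := by
  intro P hP
  refine mem_hSet_singleton.2 ⟨hP.1, ?_⟩
  by_cases hi : i ∈ P
  · exact P.mul_mem_left b hi
  · have hF : P ∈ hSet Y F := ⟨hP.1, fun f hf =>
      ((hprime P hP.1).mem_or_mem (hP.2 ⟨f, hf, rfl⟩)).resolve_right hi⟩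
    exact P.mul_mem_right i (mem_hSet_singleton.1 (h hF)).2

lemma image_mul_subset_of_subset_colon {J I : Ideal R} {F : Set R}
    (hF : F ⊆ J.colon I) {i : R} (hi : i ∈ I) : (· * i) '' F ⊆ J := by
  rintro _ ⟨f, hf, rfl⟩
  exact Submodule.mem_colon.1 (hF hf) i hi

lemma IsStrongHIdeal.colon (hprime : ∀ P ∈ Y, P.IsPrime) {J : Ideal R}
    (hJ : IsStrongHIdeal Y J) (I : Ideal R) : IsStrongHIdeal Y (J.colon I) :=
  fun _ hF hFJ _ hb => Submodule.mem_colon.2 fun i hi =>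
    hJ _ (hF.image _) (image_mul_subset_of_subset_colon hFJ hi) _
      (hSet_image_mul_subset hprime hb i)

lemma IsHIdeal.colon (hprime : ∀ P ∈ Y, P.IsPrime) {J : Ideal R}
    (hJ : IsHIdeal Y J) (I : Ideal R) : IsHIdeal Y (J.colon I) := by
  intro a ha b hb
  refine Submodule.mem_colon.2 fun i hi => hJ (a * i) (Submodule.mem_colon.1 ha i hi) (b * i) ?_
  simpa only [Set.image_singleton] using hSet_image_mul_subset hprime hb i

lemma IsYHilbert.colon (hprime : ∀ P ∈ Y, P.IsPrime) {J : Ideal R}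
    (hJ : IsYHilbert Y J) (I : Ideal R) : IsYHilbert Y (J.colon I) := by
  refine isYHilbert_iff.2 fun b hb => Submodule.mem_colon.2 fun i hi => isYHilbert_iff.1 hJ _ ?_
  exact (hSet_anti (image_mul_subset_of_subset_colon subset_rfl hi)).trans
    (hSet_image_mul_subset hprime hb i)

end

/-- ideal quotients of (strong) `ℋ_Y`-ideals / `Y`-Hilbert ideals are
again such. Here `J.colon I = {x : R | x • I ⊆ J}`. -/
theorem stmt12 {R : Type*} [CommRing R] (Y : Set (Ideal R))
    (hprime : ∀ P ∈ Y, P.IsPrime) (J I : Ideal R) :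
    (IsStrongHIdeal Y J → IsStrongHIdeal Y (J.colon I)) ∧
    (IsHIdeal Y J → IsHIdeal Y (J.colon I)) ∧
    (IsYHilbert Y J → IsYHilbert Y (J.colon I)) :=
  ⟨fun hJ => hJ.colon hprime I, fun hJ => hJ.colon hprime I, fun hJ => hJ.colon hprime I⟩
end
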